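/- arXiv:2507.00645 — 7 statements merged into one kernel-verified Lean document; each statement's English description precedes it below -/
import Mathlib

section
/- Let H1, H2 be real separable Hilbert spaces, u ∈ H1 and v ∈ H2 unit vectors, and H a bounded linear operator from H1 to H2 with Hu = v, H*v = u, and |⟨H u⊥, v⊥⟩| < 1 for every pair of unit vectors u⊥ ⊥ u and v⊥ ⊥ v. Then for every pair of unit vectors a ∈ H1, b ∈ H2 one has ⟨Ha, b⟩ ≤ 1, and equality holds if and only if (a,b) = (u,v) or (a,b) = (−u,−v). -/
/-!
Split `a = ⟪u, a⟫ • u + a'` and `b = ⟪v, b⟫ • v + b'` with `a' ⊥ u`, `b' ⊥ v`. Since `H u = v` and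
`H* v = u`, the cross terms vanish and `⟪H a, b⟫ = α β + ⟪H a', b'⟫` with `α = ⟪u, a⟫`, `β = ⟪v, b⟫`.
The hypothesis on orthogonal complements, rescaled, gives `⟪H a', b'⟫ < ‖a'‖ ‖b'‖` unless `a'` or `b'`
vanishes. So `⟪H a, b⟫ ≤ α β + ‖a'‖ ‖b'‖ ≤ 1` by Cauchy–Schwarz for the unit vectors `(α, ‖a'‖)` and
`(β, ‖b'‖)` of `ℝ²`, and equality forces these two planar vectors to coincide and `a' = b' = 0`.
-/

open scoped RealInnerProductSpace

lemma mul_add_mul_eq_one_sub {α β s t : ℝ} (h₁ : α ^ 2 + s ^ 2 = 1) (h₂ : β ^ 2 + t ^ 2 = 1) :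
    α * β + s * t = 1 - ((α - β) ^ 2 + (s - t) ^ 2) / 2 := by
  linear_combination (h₁ + h₂) / 2

lemma mul_add_mul_le_one {α β s t : ℝ} (h₁ : α ^ 2 + s ^ 2 = 1) (h₂ : β ^ 2 + t ^ 2 = 1) :
    α * β + s * t ≤ 1 := by
  rw [mul_add_mul_eq_one_sub h₁ h₂]
  linarith [sq_nonneg (α - β), sq_nonneg (s - t)]

lemma mul_add_mul_eq_one_iff {α β s t : ℝ} (h₁ : α ^ 2 + s ^ 2 = 1) (h₂ : β ^ 2 + t ^ 2 = 1) :
    α * β + s * t = 1 ↔ α = β ∧ s = t := by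
  rw [mul_add_mul_eq_one_sub h₁ h₂]
  constructor
  · intro h
    have h₀ : (α - β) ^ 2 + (s - t) ^ 2 = 0 := by linarith
    rw [add_eq_zero_iff_of_nonneg (sq_nonneg _) (sq_nonneg _), sq_eq_zero_iff, sq_eq_zero_iff,
      sub_eq_zero, sub_eq_zero] at h₀
    exact h₀
  · rintro ⟨rfl, rfl⟩
    simp

section OrthogonalSplitting

variable {E : Type*} [NormedAddCommGroup E] [InnerProductSpace ℝ E] {u : E}

lemma inner_sub_inner_smul_eq_zero (hu : ‖u‖ = 1) (a : E) : ⟪u, a - ⟪u, a⟫ • u⟫ = 0 := by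
  rw [inner_sub_right, real_inner_smul_right, real_inner_self_eq_norm_sq, hu]
  ring

lemma sq_inner_add_sq_norm_sub_inner_smul (hu : ‖u‖ = 1) (a : E) :
    ⟪u, a⟫ ^ 2 + ‖a - ⟪u, a⟫ • u‖ ^ 2 = ‖a‖ ^ 2 := by
  rw [norm_sub_sq_real, real_inner_smul_right, norm_smul, hu, mul_one, Real.norm_eq_abs, sq_abs,
    real_inner_comm]
  ring

end OrthogonalSplitting

section Operator

variable {E F : Type*} [NormedAddCommGroup E] [InnerProductSpace ℝ E] [CompleteSpace E]
  [NormedAddCommGroup F] [InnerProductSpace ℝ F] [CompleteSpace F]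
  {H : E →L[ℝ] F} {u : E} {v : F}

lemma inner_apply_smul_add_smul_add (hv : ‖v‖ = 1) (hHu : H u = v)
    (hHv : ContinuousLinearMap.adjoint H v = u) {a' : E} {b' : F} (ha' : ⟪u, a'⟫ = 0)
    (hb' : ⟪v, b'⟫ = 0) (α β : ℝ) :
    ⟪H (α • u + a'), β • v + b'⟫ = α * β + ⟪H a', b'⟫ := by
  have hHa' : ⟪H a', v⟫ = 0 := by
    rw [← ContinuousLinearMap.adjoint_inner_right, hHv, real_inner_comm, ha']
  rw [map_add, map_smul, hHu]
  simp only [inner_add_left, inner_add_right, real_inner_smul_left, real_inner_smul_right,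
    inner_self_eq_one_of_norm_eq_one hv, hHa', hb']
  ring

end Operator

section Contraction

variable {E F : Type*} [NormedAddCommGroup E] [InnerProductSpace ℝ E]
  [NormedAddCommGroup F] [InnerProductSpace ℝ F] {H : E →L[ℝ] F} {u : E} {v : F}

variable (hperp : ∀ (u' : E) (v' : F), ‖u'‖ = 1 → ‖v'‖ = 1 → ⟪u, u'⟫ = 0 → ⟪v, v'⟫ = 0 →
  ⟪H u', v'⟫ < 1)
include hperp

lemma inner_apply_lt_norm_mul_norm {a' : E} {b' : F} (ha' : ⟪u, a'⟫ = 0) (hb' : ⟪v, b'⟫ = 0)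
    (ha₀ : a' ≠ 0) (hb₀ : b' ≠ 0) : ⟪H a', b'⟫ < ‖a'‖ * ‖b'‖ := by
  have hunit := hperp (‖a'‖⁻¹ • a') (‖b'‖⁻¹ • b') (norm_smul_inv_norm ha₀)
    (norm_smul_inv_norm hb₀) (by rw [real_inner_smul_right, ha', mul_zero])
    (by rw [real_inner_smul_right, hb', mul_zero])
  rw [map_smul, real_inner_smul_left, real_inner_smul_right, ← mul_assoc, ← mul_inv,
    inv_mul_lt_iff₀ (by positivity), mul_one] at hunit
  exact hunit

lemma inner_apply_le_norm_mul_norm {a' : E} {b' : F} (ha' : ⟪u, a'⟫ = 0) (hb' : ⟪v, b'⟫ = 0) :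
    ⟪H a', b'⟫ ≤ ‖a'‖ * ‖b'‖ := by
  rcases eq_or_ne a' 0 with rfl | ha₀
  · simp
  rcases eq_or_ne b' 0 with rfl | hb₀
  · simp
  exact (inner_apply_lt_norm_mul_norm hperp ha' hb' ha₀ hb₀).le

lemma eq_and_eq_zero_of_mul_add_inner_apply_eq_one {a' : E} {b' : F} (ha' : ⟪u, a'⟫ = 0)
    (hb' : ⟪v, b'⟫ = 0) {α β : ℝ} (hα : α ^ 2 + ‖a'‖ ^ 2 = 1) (hβ : β ^ 2 + ‖b'‖ ^ 2 = 1)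
    (h : α * β + ⟪H a', b'⟫ = 1) : α = β ∧ a' = 0 ∧ b' = 0 := by
  have hle := inner_apply_le_norm_mul_norm hperp ha' hb'
  obtain ⟨hαβ, hnorm⟩ := (mul_add_mul_eq_one_iff hα hβ).1 <|
    le_antisymm (mul_add_mul_le_one hα hβ) (by linarith)
  have ha'0 : a' = 0 := by
    by_contra ha₀
    have hb₀ : b' ≠ 0 := by rwa [← norm_ne_zero_iff, ← hnorm, norm_ne_zero_iff]
    linarith [inner_apply_lt_norm_mul_norm hperp ha' hb' ha₀ hb₀, mul_add_mul_le_one hα hβ]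
  exact ⟨hαβ, ha'0, by rwa [← norm_eq_zero, ← hnorm, norm_eq_zero]⟩

end Contraction
theorem stmt1_general {H1 H2 : Type*}
    [NormedAddCommGroup H1] [InnerProductSpace ℝ H1] [CompleteSpace H1]
    [NormedAddCommGroup H2] [InnerProductSpace ℝ H2] [CompleteSpace H2]
    (u : H1) (v : H2) (hu : ‖u‖ = 1) (hv : ‖v‖ = 1)
    (H : H1 →L[ℝ] H2)
    (hHu : H u = v) (hHv : ContinuousLinearMap.adjoint H v = u)
    (hperp : ∀ (u' : H1) (v' : H2), ‖u'‖ = 1 → ‖v'‖ = 1 →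
      ⟪u, u'⟫ = 0 → ⟪v, v'⟫ = 0 → |⟪H u', v'⟫| < 1) :
    ∀ (a : H1) (b : H2), ‖a‖ = 1 → ‖b‖ = 1 →
      ⟪H a, b⟫ ≤ 1 ∧ (⟪H a, b⟫ = 1 ↔ (a = u ∧ b = v) ∨ (a = -u ∧ b = -v)) := by
  intro a b ha hb
  have hperp' : ∀ (u' : H1) (v' : H2), ‖u'‖ = 1 → ‖v'‖ = 1 → ⟪u, u'⟫ = 0 → ⟪v, v'⟫ = 0 →
      ⟪H u', v'⟫ < 1 := fun u' v' h₁ h₂ h₃ h₄ => (le_abs_self _).trans_lt (hperp u' v' h₁ h₂ h₃ h₄)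
  set α := ⟪u, a⟫
  set β := ⟪v, b⟫
  set a' := a - α • u
  set b' := b - β • v
  have ha' : ⟪u, a'⟫ = 0 := inner_sub_inner_smul_eq_zero hu a
  have hb' : ⟪v, b'⟫ = 0 := inner_sub_inner_smul_eq_zero hv b
  have hα : α ^ 2 + ‖a'‖ ^ 2 = 1 := by rw [sq_inner_add_sq_norm_sub_inner_smul hu, ha, one_pow]
  have hβ : β ^ 2 + ‖b'‖ ^ 2 = 1 := by rw [sq_inner_add_sq_norm_sub_inner_smul hv, hb, one_pow]
  have hsplit : ⟪H a, b⟫ = α * β + ⟪H a', b'⟫ := by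
    rw [← inner_apply_smul_add_smul_add hv hHu hHv ha' hb', add_sub_cancel, add_sub_cancel]
  refine ⟨?_, fun h => ?_, ?_⟩
  · linarith [inner_apply_le_norm_mul_norm hperp' ha' hb', mul_add_mul_le_one hα hβ]
  · obtain ⟨hαβ, ha'0, hb'0⟩ :=
      eq_and_eq_zero_of_mul_add_inner_apply_eq_one hperp' ha' hb' hα hβ (hsplit ▸ h)
    have hab : a = α • u ∧ b = α • v := ⟨sub_eq_zero.1 ha'0, hαβ ▸ sub_eq_zero.1 hb'0⟩
    have hα1 : α ^ 2 = 1 := by simpa [ha'0] using hα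
    rcases sq_eq_one_iff.1 hα1 with h1 | h1
    · left; simpa [h1] using hab
    · right; simpa [h1] using hab
  · rintro (⟨rfl, rfl⟩ | ⟨rfl, rfl⟩)
    · rw [hHu, inner_self_eq_one_of_norm_eq_one hv]
    · rw [map_neg, hHu, inner_neg_neg, inner_self_eq_one_of_norm_eq_one hv]

theorem stmt1 {H1 H2 : Type*}
    [NormedAddCommGroup H1] [InnerProductSpace ℝ H1] [CompleteSpace H1]
    [TopologicalSpace.SeparableSpace H1]
    [NormedAddCommGroup H2] [InnerProductSpace ℝ H2] [CompleteSpace H2]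
    [TopologicalSpace.SeparableSpace H2]
    (u : H1) (v : H2) (hu : ‖u‖ = 1) (hv : ‖v‖ = 1)
    (H : H1 →L[ℝ] H2)
    (hHu : H u = v) (hHv : ContinuousLinearMap.adjoint H v = u)
    (hperp : ∀ (u' : H1) (v' : H2), ‖u'‖ = 1 → ‖v'‖ = 1 →
      ⟪u, u'⟫ = 0 → ⟪v, v'⟫ = 0 → |⟪H u', v'⟫| < 1) :
    ∀ (a : H1) (b : H2), ‖a‖ = 1 → ‖b‖ = 1 →
      ⟪H a, b⟫ ≤ 1 ∧ (⟪H a, b⟫ = 1 ↔ (a = u ∧ b = v) ∨ (a = -u ∧ b = -v)) :=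
  stmt1_general u v hu hv H hHu hHv hperp
end

section
/- Let H1, H2 be real separable Hilbert spaces, u ∈ H1 and v ∈ H2 unit vectors, and H a Hilbert–Schmidt operator from H1 to H2 satisfying Hu = v, H*v = u, and |⟨H u⊥, v⊥⟩| < 1 for all unit vectors u⊥ ⊥ u and v⊥ ⊥ v. Then every trace-class operator G from H1 to H2 satisfying ⟨H, G⟩_{HS} = ‖G‖_* (the nuclear norm of G) is of the form G = σ (u ⊗ v) for some σ ≥ 0. -/
/-!
Split unit vectors as `x = α u + x'` and `y = β v + y'` with `x' ⊥ u`, `y' ⊥ v`. Since `H u = v`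
and `H* v = u`, the operator is block diagonal, so `⟪H x, y⟫ = α β + ⟪H x', y'⟫`, and the
hypothesis on `u⊥, v⊥` bounds the last term by `‖x'‖ ‖y'‖`, strictly unless `x'` or `y'` vanishes.
By Cauchy–Schwarz in `ℝ²`, `⟪H x, y⟫ ≤ 1`, with equality only for `(x, y) = ±(u, v)`.
Now `∑ σₖ ⟪H φₖ, ψₖ⟫ = ∑ σₖ` forces `⟪H φₖ, ψₖ⟫ = 1` whenever `σₖ ≠ 0`; such `φₖ` are `±u`,
so by orthonormality at most one `σₖ` is nonzero, and `G = σₖ (u ⊗ v)`.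
-/

open scoped RealInnerProductSpace

noncomputable def rankOne {H1 H2 : Type*} [NormedAddCommGroup H1] [InnerProductSpace ℝ H1]
    [NormedAddCommGroup H2] [InnerProductSpace ℝ H2] (u : H1) (v : H2) : H1 →L[ℝ] H2 :=
  (innerSL ℝ u).smulRight v

theorem Summable.eq_of_le_of_tsum_eq {ι α : Type*} [AddCommGroup α] [PartialOrder α]
    [IsOrderedAddMonoid α] [TopologicalSpace α] [IsTopologicalAddGroup α] [OrderClosedTopology α]
    {f g : ι → α} (hfg : f ≤ g) (hf : Summable f) (hg : Summable g)
    (hsum : ∑' i, f i = ∑' i, g i) : f = g := by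
  by_contra hne
  obtain ⟨i, hi⟩ := Function.ne_iff.mp hne
  exact (Summable.tsum_lt_tsum hfg (lt_of_le_of_ne (hfg i) hi) hf hg).ne hsum

theorem eq_one_of_tsum_mul_eq_tsum {ι : Type*} {σ c : ι → ℝ} (hσ : ∀ k, 0 ≤ σ k)
    (hσsum : Summable σ) (hc : ∀ k, |c k| ≤ 1) (h : ∑' k, σ k * c k = ∑' k, σ k) {k : ι}
    (hk : σ k ≠ 0) : c k = 1 := by
  have hle : (fun k => σ k * c k) ≤ σ := fun k =>
    mul_le_of_le_one_right (hσ k) (le_of_abs_le (hc k))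
  have hsummable : Summable fun k => σ k * c k :=
    hσsum.of_norm_bounded fun k => by
      rw [norm_mul, Real.norm_of_nonneg (hσ k)]
      exact mul_le_of_le_one_right (hσ k) (hc k)
  exact (mul_eq_left₀ hk).mp (congr_fun (hsummable.eq_of_le_of_tsum_eq hle hσsum h) k)

theorem mul_add_mul_le_one_s2 {α β a c : ℝ} (hα : α ^ 2 + a ^ 2 = 1) (hβ : β ^ 2 + c ^ 2 = 1) :
    α * β + a * c ≤ 1 := by
  nlinarith [sq_nonneg (α - β), sq_nonneg (a - c)]

theorem eq_and_eq_of_mul_add_mul_eq_one {α β a c : ℝ} (hα : α ^ 2 + a ^ 2 = 1)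
    (hβ : β ^ 2 + c ^ 2 = 1) (h : α * β + a * c = 1) : α = β ∧ a = c := by
  have hsq : (α - β) ^ 2 + (a - c) ^ 2 = 0 := by linear_combination hα + hβ - 2 * h
  constructor <;> nlinarith [sq_nonneg (α - β), sq_nonneg (a - c)]

section UnitVector

variable {E : Type*} [NormedAddCommGroup E] [InnerProductSpace ℝ E] {u : E}

theorem inner_sub_inner_smul_self (hu : ‖u‖ = 1) (x : E) : ⟪u, x - ⟪u, x⟫ • u⟫ = 0 := by
  rw [inner_sub_right, real_inner_smul_right, real_inner_self_eq_norm_sq, hu]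
  ring

theorem sq_add_norm_sub_inner_smul_sq (hu : ‖u‖ = 1) {x : E} (hx : ‖x‖ = 1) :
    ⟪u, x⟫ ^ 2 + ‖x - ⟪u, x⟫ • u‖ ^ 2 = 1 := by
  rw [norm_sub_sq_real, real_inner_smul_right, norm_smul, hu, hx, real_inner_comm,
    Real.norm_eq_abs, mul_one, sq_abs]
  ring

end UnitVector

theorem Orthonormal.eq_of_eq_smul {ι E : Type*} [NormedAddCommGroup E] [InnerProductSpace ℝ E]
    {φ : ι → E} (hφ : Orthonormal ℝ φ) {w : E} {i j : ι} {a b : ℝ} (hi : φ i = a • w)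
    (hj : φ j = b • w) : i = j := by
  by_contra hij
  have hij := hφ.inner_eq_zero hij
  have hii : ⟪φ i, φ i⟫ = 1 := by rw [real_inner_self_eq_norm_sq, hφ.1 i, one_pow]
  have hjj : ⟪φ j, φ j⟫ = 1 := by rw [real_inner_self_eq_norm_sq, hφ.1 j, one_pow]
  simp only [hi, hj, real_inner_smul_left, real_inner_smul_right] at hij hii hjj
  exact one_ne_zero (by
    linear_combination a * (b * ⟪w, w⟫) * hij - b * (b * ⟪w, w⟫) * hii - hjj : (1 : ℝ) = 0)

section BlockDiagonal

variable {H1 H2 : Type*} [NormedAddCommGroup H1] [InnerProductSpace ℝ H1]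
  [NormedAddCommGroup H2] [InnerProductSpace ℝ H2] {u : H1} {v : H2} {H : H1 →L[ℝ] H2}

theorem inner_apply_lt_norm_mul_norm_s2
    (hperp : ∀ (u' : H1) (v' : H2), ‖u'‖ = 1 → ‖v'‖ = 1 →
      ⟪u, u'⟫ = 0 → ⟪v, v'⟫ = 0 → |⟪H u', v'⟫| < 1)
    {x : H1} {y : H2} (hux : ⟪u, x⟫ = 0) (hvy : ⟪v, y⟫ = 0) (hx : x ≠ 0) (hy : y ≠ 0) :
    ⟪H x, y⟫ < ‖x‖ * ‖y‖ := by
  have hx₀ : 0 < ‖x‖ := norm_pos_iff.mpr hx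
  have hy₀ : 0 < ‖y‖ := norm_pos_iff.mpr hy
  have h := hperp (‖x‖⁻¹ • x) (‖y‖⁻¹ • y) (norm_smul_inv_norm hx) (norm_smul_inv_norm hy)
    (by rw [real_inner_smul_right, hux, mul_zero]) (by rw [real_inner_smul_right, hvy, mul_zero])
  rw [map_smul, real_inner_smul_left, real_inner_smul_right, ← mul_assoc, ← mul_inv] at h
  have := (le_abs_self _).trans_lt h
  rwa [inv_mul_lt_iff₀ (by positivity), mul_one] at this

theorem inner_apply_le_norm_mul_norm_s2
    (hperp : ∀ (u' : H1) (v' : H2), ‖u'‖ = 1 → ‖v'‖ = 1 →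
      ⟪u, u'⟫ = 0 → ⟪v, v'⟫ = 0 → |⟪H u', v'⟫| < 1)
    {x : H1} {y : H2} (hux : ⟪u, x⟫ = 0) (hvy : ⟪v, y⟫ = 0) :
    ⟪H x, y⟫ ≤ ‖x‖ * ‖y‖ := by
  rcases eq_or_ne x 0 with rfl | hx
  · simp
  rcases eq_or_ne y 0 with rfl | hy
  · simp
  exact (inner_apply_lt_norm_mul_norm_s2 hperp hux hvy hx hy).le

variable [CompleteSpace H1] [CompleteSpace H2]

theorem inner_apply_eq_mul_add_inner_apply (hv : ‖v‖ = 1) (hHu : H u = v)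
    (hHv : ContinuousLinearMap.adjoint H v = u) (x : H1) (y : H2) :
    ⟪H x, y⟫ = ⟪u, x⟫ * ⟪v, y⟫ + ⟪H (x - ⟪u, x⟫ • u), y - ⟪v, y⟫ • v⟫ := by
  have hHxv : ⟪H x, v⟫ = ⟪u, x⟫ := by
    rw [← ContinuousLinearMap.adjoint_inner_right, hHv, real_inner_comm]
  simp only [map_sub, map_smul, hHu, inner_sub_left, inner_sub_right, real_inner_smul_left,
    real_inner_smul_right, hHxv, real_inner_self_eq_norm_sq, hv]
  ring

variable (hu : ‖u‖ = 1) (hv : ‖v‖ = 1) (hHu : H u = v)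
  (hHv : ContinuousLinearMap.adjoint H v = u)
  (hperp : ∀ (u' : H1) (v' : H2), ‖u'‖ = 1 → ‖v'‖ = 1 →
      ⟪u, u'⟫ = 0 → ⟪v, v'⟫ = 0 → |⟪H u', v'⟫| < 1)
include hu hv hHu hHv hperp

theorem inner_apply_le_one {x : H1} {y : H2} (hx : ‖x‖ = 1) (hy : ‖y‖ = 1) :
    ⟪H x, y⟫ ≤ 1 := by
  rw [inner_apply_eq_mul_add_inner_apply hv hHu hHv]
  grw [inner_apply_le_norm_mul_norm_s2 hperp (inner_sub_inner_smul_self hu x)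
    (inner_sub_inner_smul_self hv y)]
  exact mul_add_mul_le_one_s2 (sq_add_norm_sub_inner_smul_sq hu hx)
    (sq_add_norm_sub_inner_smul_sq hv hy)

theorem abs_inner_apply_le_one {x : H1} {y : H2} (hx : ‖x‖ = 1) (hy : ‖y‖ = 1) :
    |⟪H x, y⟫| ≤ 1 := by
  have hneg := inner_apply_le_one hu hv hHu hHv hperp hx (y := -y) (by rwa [norm_neg])
  rw [inner_neg_right] at hneg
  exact abs_le.mpr ⟨by linarith, inner_apply_le_one hu hv hHu hHv hperp hx hy⟩

theorem exists_eq_smul_of_inner_apply_eq_one {x : H1} {y : H2} (hx : ‖x‖ = 1) (hy : ‖y‖ = 1)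
    (h : ⟪H x, y⟫ = 1) : ∃ ε : ℝ, ε * ε = 1 ∧ x = ε • u ∧ y = ε • v := by
  have hnx := sq_add_norm_sub_inner_smul_sq hu hx
  have hny := sq_add_norm_sub_inner_smul_sq hv hy
  have hux' := inner_sub_inner_smul_self hu x
  have hvy' := inner_sub_inner_smul_self hv y
  rw [inner_apply_eq_mul_add_inner_apply hv hHu hHv] at h
  set x' := x - ⟪u, x⟫ • u
  set y' := y - ⟪v, y⟫ • v
  have hsat : ⟪u, x⟫ * ⟪v, y⟫ + ‖x'‖ * ‖y'‖ = 1 :=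
    le_antisymm (mul_add_mul_le_one_s2 hnx hny)
      (h ▸ add_le_add_right (inner_apply_le_norm_mul_norm_s2 hperp hux' hvy') _)
  obtain ⟨hαβ, hxy⟩ := eq_and_eq_of_mul_add_mul_eq_one hnx hny hsat
  -- If `x' ≠ 0` then also `y' ≠ 0`, and the strict bound on `u⊥ × v⊥` contradicts `hsat`.
  have hx'0 : x' = 0 := by
    by_contra hx'0
    have hy'0 : y' ≠ 0 := norm_ne_zero_iff.mp (hxy ▸ norm_ne_zero_iff.mpr hx'0)
    linarith [inner_apply_lt_norm_mul_norm_s2 hperp hux' hvy' hx'0 hy'0]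
  have hy'0 : y' = 0 := norm_eq_zero.mp (by rw [← hxy, hx'0, norm_zero])
  rw [hx'0, norm_zero] at hnx
  exact ⟨⟪u, x⟫, by linear_combination hnx, sub_eq_zero.mp hx'0, hαβ ▸ sub_eq_zero.mp hy'0⟩

end BlockDiagonal

theorem stmt2_general {H1 H2 : Type*}
    [NormedAddCommGroup H1] [InnerProductSpace ℝ H1] [CompleteSpace H1]
    [NormedAddCommGroup H2] [InnerProductSpace ℝ H2] [CompleteSpace H2]
    (u : H1) (v : H2) (hu : ‖u‖ = 1) (hv : ‖v‖ = 1)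
    (H : H1 →L[ℝ] H2)
    (hHu : H u = v) (hHv : ContinuousLinearMap.adjoint H v = u)
    (hperp : ∀ (u' : H1) (v' : H2), ‖u'‖ = 1 → ‖v'‖ = 1 →
      ⟪u, u'⟫ = 0 → ⟪v, v'⟫ = 0 → |⟪H u', v'⟫| < 1)
    -- `G` is a trace-class operator with singular value decomposition `Σ σ k • φ k ⊗ ψ k`:
    (G : H1 →L[ℝ] H2) (σ : ℕ → ℝ) (φ : ℕ → H1) (ψ : ℕ → H2)
    (hσ : ∀ k, 0 ≤ σ k) (hσsum : Summable σ)
    (hφ : Orthonormal ℝ φ) (hψ : Orthonormal ℝ ψ)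
    (hG : ∀ a, G a = ∑' k, (σ k * ⟪φ k, a⟫) • ψ k)
    -- `⟨H, G⟩_{HS} = ‖G‖_*`:
    (hopt : ∑' k, σ k * ⟪H (φ k), ψ k⟫ = ∑' k, σ k) :
    ∃ c : ℝ, 0 ≤ c ∧ G = c • rankOne u v := by
  have hsat : ∀ k, σ k ≠ 0 → ⟪H (φ k), ψ k⟫ = 1 := fun k =>
    eq_one_of_tsum_mul_eq_tsum hσ hσsum
      (fun k => abs_inner_apply_le_one hu hv hHu hHv hperp (hφ.1 k) (hψ.1 k)) hopt
  by_cases hG0 : ∀ k, σ k = 0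
  · exact ⟨0, le_rfl, by ext a; simp [hG, hG0]⟩
  push Not at hG0
  obtain ⟨k₀, hk₀⟩ := hG0
  obtain ⟨ε, hε, hφk₀, hψk₀⟩ :=
    exists_eq_smul_of_inner_apply_eq_one hu hv hHu hHv hperp (hφ.1 k₀) (hψ.1 k₀) (hsat k₀ hk₀)
  have hσk : ∀ k ≠ k₀, σ k = 0 := fun k hk => by
    by_contra hσk
    obtain ⟨ε', -, hφk, -⟩ :=
      exists_eq_smul_of_inner_apply_eq_one hu hv hHu hHv hperp (hφ.1 k) (hψ.1 k) (hsat k hσk)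
    exact hk (hφ.eq_of_eq_smul hφk hφk₀)
  refine ⟨σ k₀, hσ k₀, ?_⟩
  ext a
  rw [hG, tsum_eq_single k₀ fun k hk => by rw [hσk k hk, zero_mul, zero_smul], hφk₀, hψk₀,
    real_inner_smul_left, smul_smul, smul_apply, rankOne,
    ContinuousLinearMap.smulRight_apply, innerSL_apply_apply, smul_smul]
  congr 1
  linear_combination σ k₀ * ⟪u, a⟫ * hε

theorem stmt2 {H1 H2 ι : Type*}
    [NormedAddCommGroup H1] [InnerProductSpace ℝ H1] [CompleteSpace H1]
    [TopologicalSpace.SeparableSpace H1]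
    [NormedAddCommGroup H2] [InnerProductSpace ℝ H2] [CompleteSpace H2]
    [TopologicalSpace.SeparableSpace H2]
    (u : H1) (v : H2) (hu : ‖u‖ = 1) (hv : ‖v‖ = 1)
    -- `H` is a Hilbert–Schmidt operator:
    (H : H1 →L[ℝ] H2) (b : HilbertBasis ι ℝ H1)
    (hHS : Summable fun i => ‖H (b i)‖ ^ 2)
    (hHu : H u = v) (hHv : ContinuousLinearMap.adjoint H v = u)
    (hperp : ∀ (u' : H1) (v' : H2), ‖u'‖ = 1 → ‖v'‖ = 1 →
      ⟪u, u'⟫ = 0 → ⟪v, v'⟫ = 0 → |⟪H u', v'⟫| < 1)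
    -- `G` is a trace-class operator with singular value decomposition `Σ σ k • φ k ⊗ ψ k`:
    (G : H1 →L[ℝ] H2) (σ : ℕ → ℝ) (φ : ℕ → H1) (ψ : ℕ → H2)
    (hσ : ∀ k, 0 ≤ σ k) (hσsum : Summable σ)
    (hφ : Orthonormal ℝ φ) (hψ : Orthonormal ℝ ψ)
    (hG : ∀ a, G a = ∑' k, (σ k * ⟪φ k, a⟫) • ψ k)
    -- `⟨H, G⟩_{HS} = ‖G‖_*`:
    (hopt : ∑' k, σ k * ⟪H (φ k), ψ k⟫ = ∑' k, σ k) :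
    ∃ c : ℝ, 0 ≤ c ∧ G = c • rankOne u v :=
  stmt2_general u v hu hv H hHu hHv hperp G σ φ ψ hσ hσsum hφ hψ hG hopt
end

section
/- Let H1, H2 be real separable Hilbert spaces, u ∈ H1 and v ∈ H2 unit vectors, F = σ (u ⊗ v) with σ > 0, and H a Hilbert–Schmidt operator from H1 to H2. Then the following are equivalent: (i) ‖H‖ ≤ 1 (operator norm) and ⟨H, F⟩_{HS} = ‖F‖_* ; (ii) there exists a Hilbert–Schmidt operator W with H = u ⊗ v + W, Wu = 0, W*v = 0, and ‖W‖ ≤ 1; (iii) Hu = v, H*v = u, and |⟨H u⊥, v⊥⟩| ≤ 1 for all unit vectors u⊥ ⊥ u, v⊥ ⊥ v. -/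
open scoped RealInnerProductSpace

private lemma cs_eq {E : Type*} [NormedAddCommGroup E] [InnerProductSpace ℝ E]
    {y v : E} (hy : ‖y‖ ≤ 1) (hv : ‖v‖ = 1) (h : ⟪y, v⟫ = 1) : y = v := by
  have h1 : ‖y - v‖ ^ 2 ≤ 0 := by
    rw [norm_sub_sq_real]; nlinarith [norm_nonneg y]
  have h2 : ‖y - v‖ = 0 := by nlinarith [norm_nonneg (y - v)]
  exact sub_eq_zero.mp (norm_eq_zero.mp h2)

private lemma rankOne_apply' {H1 H2 : Type*} [NormedAddCommGroup H1] [InnerProductSpace ℝ H1]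
    [NormedAddCommGroup H2] [InnerProductSpace ℝ H2] (u : H1) (v : H2) (x : H1) :
    rankOne u v x = ⟪u, x⟫ • v := rfl

private lemma adj_rankOne {H1 H2 : Type*} [NormedAddCommGroup H1] [InnerProductSpace ℝ H1]
    [CompleteSpace H1] [NormedAddCommGroup H2] [InnerProductSpace ℝ H2] [CompleteSpace H2]
    (u : H1) (v w : H2) :
    ContinuousLinearMap.adjoint (rankOne u v) w = ⟪v, w⟫ • u := by
  apply ext_inner_right ℝ
  intro x
  rw [ContinuousLinearMap.adjoint_inner_left, rankOne_apply']
  rw [real_inner_smul_left, real_inner_smul_right]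
  rw [real_inner_comm w v]
  ring

private lemma key_norm_le {H1 H2 : Type*} [NormedAddCommGroup H1] [InnerProductSpace ℝ H1]
    [CompleteSpace H1] [NormedAddCommGroup H2] [InnerProductSpace ℝ H2] [CompleteSpace H2]
    (u : H1) (v : H2) (hu : ‖u‖ = 1) (hv : ‖v‖ = 1) (H : H1 →L[ℝ] H2)
    (h1 : H u = v) (h2 : ContinuousLinearMap.adjoint H v = u)
    (h3 : ∀ (u' : H1) (v' : H2), ‖u'‖ = 1 → ‖v'‖ = 1 →
      ⟪u, u'⟫ = 0 → ⟪v, v'⟫ = 0 → |⟪H u', v'⟫| ≤ 1) :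
    ‖H‖ ≤ 1 := by
  apply ContinuousLinearMap.opNorm_le_bound _ zero_le_one
  intro x
  rw [one_mul]
  set c := ⟪u, x⟫ with hc
  set x' := x - c • u with hx'
  have hxdec : x = c • u + x' := by rw [hx']; abel
  have hux' : ⟪u, x'⟫ = 0 := by
    rw [hx', inner_sub_right, real_inner_smul_right, real_inner_self_eq_norm_sq, hu]
    ring
  have hHx : H x = c • v + H x' := by
    conv_lhs => rw [hxdec]
    rw [map_add, map_smul, h1]
  have hvHx' : ⟪v, H x'⟫ = 0 := by
    rw [← ContinuousLinearMap.adjoint_inner_left, h2]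
    exact hux'
  have hkey : ‖H x'‖ ≤ ‖x'‖ := by
    by_cases h0 : H x' = 0
    · rw [h0, norm_zero]; exact norm_nonneg _
    by_cases hx0 : x' = 0
    · exact absurd (by rw [hx0, map_zero]) h0
    have hx'pos : 0 < ‖x'‖ := norm_pos_iff.mpr hx0
    have hHpos : 0 < ‖H x'‖ := norm_pos_iff.mpr h0
    have hb := h3 (‖x'‖⁻¹ • x') (‖H x'‖⁻¹ • H x')
      (by rw [norm_smul, norm_inv, norm_norm, inv_mul_cancel₀ hx'pos.ne'])
      (by rw [norm_smul, norm_inv, norm_norm, inv_mul_cancel₀ hHpos.ne'])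
      (by rw [real_inner_smul_right, hux', mul_zero])
      (by rw [real_inner_smul_right, hvHx', mul_zero])
    rw [map_smul] at hb
    rw [real_inner_smul_left, real_inner_smul_right, real_inner_self_eq_norm_sq] at hb
    rw [abs_of_nonneg (by positivity)] at hb
    rw [show ‖H x'‖⁻¹ * ‖H x'‖ ^ 2 = ‖H x'‖ by field_simp] at hb
    have h7 := mul_le_mul_of_nonneg_left hb hx'pos.le
    rw [mul_one, ← mul_assoc, mul_inv_cancel₀ hx'pos.ne', one_mul] at h7
    exact h7
  have hnx : ‖x‖ ^ 2 = c ^ 2 + ‖x'‖ ^ 2 := by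
    conv_lhs => rw [hxdec]
    rw [norm_add_sq_real, real_inner_smul_left, hux', norm_smul, Real.norm_eq_abs, hu]
    rw [mul_one, sq_abs]
    ring
  have hnHx : ‖H x‖ ^ 2 = c ^ 2 + ‖H x'‖ ^ 2 := by
    rw [hHx, norm_add_sq_real, real_inner_smul_left, hvHx', norm_smul, Real.norm_eq_abs, hv]
    rw [mul_one, sq_abs]
    ring
  nlinarith [norm_nonneg (H x), norm_nonneg x, norm_nonneg x', norm_nonneg (H x')]

/-- Characterizations of the subdifferential of the nuclear norm at `F = σ • u ⊗ v`.
Here `⟨H, F⟩_{HS} = σ * ⟪H u, v⟫` and `‖F‖_* = σ`. -/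
theorem stmt3 {H1 H2 ι : Type*}
    [NormedAddCommGroup H1] [InnerProductSpace ℝ H1] [CompleteSpace H1]
    [TopologicalSpace.SeparableSpace H1]
    [NormedAddCommGroup H2] [InnerProductSpace ℝ H2] [CompleteSpace H2]
    [TopologicalSpace.SeparableSpace H2]
    (u : H1) (v : H2) (hu : ‖u‖ = 1) (hv : ‖v‖ = 1)
    (σ : ℝ) (hσ : 0 < σ)
    -- `H` is a Hilbert–Schmidt operator:
    (H : H1 →L[ℝ] H2) (b : HilbertBasis ι ℝ H1)
    (hHS : Summable fun i => ‖H (b i)‖ ^ 2) :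
    -- (i) ↔ (ii)
    ((‖H‖ ≤ 1 ∧ σ * ⟪H u, v⟫ = σ) ↔
      (∃ W : H1 →L[ℝ] H2, (Summable fun i => ‖W (b i)‖ ^ 2) ∧
        H = rankOne u v + W ∧ W u = 0 ∧ ContinuousLinearMap.adjoint W v = 0 ∧ ‖W‖ ≤ 1)) ∧
    -- (i) ↔ (iii)
    ((‖H‖ ≤ 1 ∧ σ * ⟪H u, v⟫ = σ) ↔
      (H u = v ∧ ContinuousLinearMap.adjoint H v = u ∧
        ∀ (u' : H1) (v' : H2), ‖u'‖ = 1 → ‖v'‖ = 1 →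
          ⟪u, u'⟫ = 0 → ⟪v, v'⟫ = 0 → |⟪H u', v'⟫| ≤ 1)) := by
  -- the scalar condition is just `⟪H u, v⟫ = 1`
  have hσiff : ∀ t : ℝ, σ * t = σ ↔ t = 1 := by
    intro t
    constructor
    · intro h; have : σ * t = σ * 1 := by rw [mul_one]; exact h
      exact mul_left_cancel₀ hσ.ne' this
    · intro h; rw [h, mul_one]
  -- (i) → (iii)
  have h13 : (‖H‖ ≤ 1 ∧ σ * ⟪H u, v⟫ = σ) →
      (H u = v ∧ ContinuousLinearMap.adjoint H v = u ∧
        ∀ (u' : H1) (v' : H2), ‖u'‖ = 1 → ‖v'‖ = 1 →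
          ⟪u, u'⟫ = 0 → ⟪v, v'⟫ = 0 → |⟪H u', v'⟫| ≤ 1) := by
    rintro ⟨hH1, hH2⟩
    have hHuv : ⟪H u, v⟫ = 1 := (hσiff _).mp hH2
    have hHu : H u = v := by
      apply cs_eq _ hv hHuv
      calc ‖H u‖ ≤ ‖H‖ * ‖u‖ := H.le_opNorm u
        _ ≤ 1 := by rw [hu, mul_one]; exact hH1
    have hadj : ContinuousLinearMap.adjoint H v = u := by
      apply cs_eq _ hu
      · rw [ContinuousLinearMap.adjoint_inner_left, hHu, real_inner_self_eq_norm_sq, hv]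
        norm_num
      · calc ‖ContinuousLinearMap.adjoint H v‖ ≤ ‖ContinuousLinearMap.adjoint H‖ * ‖v‖ :=
              (ContinuousLinearMap.adjoint H).le_opNorm v
          _ = ‖H‖ := by rw [hv, mul_one]; exact LinearIsometryEquiv.norm_map ContinuousLinearMap.adjoint H
          _ ≤ 1 := hH1
    refine ⟨hHu, hadj, fun u' v' hu' hv' _ _ => ?_⟩
    calc |⟪H u', v'⟫| ≤ ‖H u'‖ * ‖v'‖ := abs_real_inner_le_norm _ _
      _ ≤ ‖H‖ * ‖u'‖ * ‖v'‖ := by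
          apply mul_le_mul_of_nonneg_right (H.le_opNorm u') (norm_nonneg _)
      _ ≤ 1 := by rw [hu', hv', mul_one, mul_one]; exact hH1
  -- (iii) → (i)
  have h31 : (H u = v ∧ ContinuousLinearMap.adjoint H v = u ∧
        ∀ (u' : H1) (v' : H2), ‖u'‖ = 1 → ‖v'‖ = 1 →
          ⟪u, u'⟫ = 0 → ⟪v, v'⟫ = 0 → |⟪H u', v'⟫| ≤ 1) →
      (‖H‖ ≤ 1 ∧ σ * ⟪H u, v⟫ = σ) := by
    rintro ⟨hHu, hadj, h3⟩
    refine ⟨key_norm_le u v hu hv H hHu hadj h3, (hσiff _).mpr ?_⟩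
    rw [hHu, real_inner_self_eq_norm_sq, hv]; norm_num
  constructor
  · -- (i) ↔ (ii)
    constructor
    · -- (i) → (ii)
      intro hi
      obtain ⟨hHu, hadj, -⟩ := h13 hi
      obtain ⟨hH1, -⟩ := hi
      refine ⟨H - rankOne u v, ?_, by abel, ?_, ?_, ?_⟩
      · -- summability
        have hsum2 : Summable fun i => ⟪u, b i⟫ * ⟪b i, u⟫ := b.summable_inner_mul_inner u u
        apply Summable.of_nonneg_of_le (fun i => by positivity)
          (fun i => ?_) ((hHS.mul_left 2).add (hsum2.mul_left 2))
        have ht : ‖(H - rankOne u v) (b i)‖ ≤ ‖H (b i)‖ + ‖rankOne u v (b i)‖ := by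
          rw [ContinuousLinearMap.sub_apply]
          exact norm_sub_le _ _
        have h1 : ‖rankOne u v (b i)‖ = |⟪u, b i⟫| := by
          rw [rankOne_apply', norm_smul, Real.norm_eq_abs, hv, mul_one]
        have h2 : ⟪u, b i⟫ * ⟪b i, u⟫ = |⟪u, b i⟫| ^ 2 := by
          rw [real_inner_comm (b i) u, ← sq, sq_abs]
        rw [h2]
        nlinarith [norm_nonneg ((H - rankOne u v) (b i)), norm_nonneg (H (b i)),
          abs_nonneg ⟪u, b i⟫, sq_nonneg (‖H (b i)‖ - |⟪u, b i⟫|), ht, h1]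
      · rw [ContinuousLinearMap.sub_apply, rankOne_apply', hHu, real_inner_self_eq_norm_sq,
          hu]
        norm_num
      · rw [map_sub, ContinuousLinearMap.sub_apply, hadj, adj_rankOne,
          real_inner_self_eq_norm_sq, hv]
        norm_num
      · -- ‖H - rankOne u v‖ ≤ 1
        apply ContinuousLinearMap.opNorm_le_bound _ zero_le_one
        intro x
        rw [one_mul]
        set c := ⟪u, x⟫ with hc
        set x' := x - c • u with hx'
        have hux' : ⟪u, x'⟫ = 0 := by
          rw [hx', inner_sub_right, real_inner_smul_right, real_inner_self_eq_norm_sq, hu]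
          ring
        have hWx : (H - rankOne u v) x = H x' := by
          rw [ContinuousLinearMap.sub_apply, rankOne_apply', hx', map_sub, map_smul, hHu]
        have hx'le : ‖x'‖ ≤ ‖x‖ := by
          have h5 : ‖x‖ ^ 2 = c ^ 2 + ‖x'‖ ^ 2 := by
            have hxdec : x = c • u + x' := by rw [hx']; abel
            conv_lhs => rw [hxdec]
            rw [norm_add_sq_real, real_inner_smul_left, hux', norm_smul, Real.norm_eq_abs, hu]
            rw [mul_one, sq_abs]
            ring
          nlinarith [norm_nonneg x, norm_nonneg x', sq_nonneg c]
        calc ‖(H - rankOne u v) x‖ = ‖H x'‖ := by rw [hWx]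
          _ ≤ ‖H‖ * ‖x'‖ := H.le_opNorm x'
          _ ≤ 1 * ‖x'‖ := mul_le_mul_of_nonneg_right hH1 (norm_nonneg _)
          _ = ‖x'‖ := one_mul _
          _ ≤ ‖x‖ := hx'le
    · -- (ii) → (i)
      rintro ⟨W, -, hHW, hWu, hWadj, hWn⟩
      apply h31
      have hHu : H u = v := by
        rw [hHW, ContinuousLinearMap.add_apply, rankOne_apply', hWu,
          real_inner_self_eq_norm_sq, hu]
        norm_num
      have hadj : ContinuousLinearMap.adjoint H v = u := by
        rw [hHW, map_add, ContinuousLinearMap.add_apply, adj_rankOne, hWadj,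
          real_inner_self_eq_norm_sq, hv]
        norm_num
      refine ⟨hHu, hadj, fun u' v' hu' hv' huu' hvv' => ?_⟩
      have : ⟪H u', v'⟫ = ⟪W u', v'⟫ := by
        rw [hHW, ContinuousLinearMap.add_apply, rankOne_apply', inner_add_left,
          real_inner_smul_left, huu', zero_mul, zero_add]
      rw [this]
      calc |⟪W u', v'⟫| ≤ ‖W u'‖ * ‖v'‖ := abs_real_inner_le_norm _ _
        _ ≤ ‖W‖ * ‖u'‖ * ‖v'‖ := by
            apply mul_le_mul_of_nonneg_right (W.le_opNorm u') (norm_nonneg _)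
        _ ≤ 1 := by rw [hu', hv', mul_one, mul_one]; exact hWn
  · exact ⟨h13, h31⟩
end

section
/- For every compact operator G between real separable Hilbert spaces with finite nuclear norm, ‖G‖_* = sup { ⟨G, H⟩_{HS} : H Hilbert–Schmidt, ‖H‖ ≤ 1 }, where ‖H‖ is the operator norm. -/
open scoped RealInnerProductSpace

/-- The Hilbert–Schmidt inner product `⟨A, B⟩ = Σ_i ⟪A e_i, B e_i⟫` with respect to an
orthonormal basis `b` of the source space. -/
noncomputable def hsInner {H1 H2 ι : Type*} [NormedAddCommGroup H1] [InnerProductSpace ℝ H1]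
    [NormedAddCommGroup H2] [InnerProductSpace ℝ H2]
    (b : HilbertBasis ι ℝ H1) (A B : H1 →L[ℝ] H2) : ℝ :=
  ∑' i, ⟪A (b i), B (b i)⟫

section aux
variable {H1 H2 ι : Type*}
    [NormedAddCommGroup H1] [InnerProductSpace ℝ H1] [CompleteSpace H1]
    [NormedAddCommGroup H2] [InnerProductSpace ℝ H2] [CompleteSpace H2]

lemma abs_mul_le_sq_add_sq (a c : ℝ) : |a * c| ≤ a ^ 2 + c ^ 2 := by
  rcases abs_cases (a * c) with ⟨h, _⟩ | ⟨h, _⟩ <;> rw [h] <;>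
    nlinarith [sq_nonneg (a - c), sq_nonneg (a + c)]

lemma parseval_summable (b : HilbertBasis ι ℝ H1) (x : H1) :
    Summable fun i => ⟪x, b i⟫ ^ 2 := by
  have := b.summable_inner_mul_inner x x
  refine this.congr fun i => ?_
  rw [real_inner_comm (b i) x, sq]

lemma parseval_tsum (b : HilbertBasis ι ℝ H1) (x : H1) :
    ∑' i, ⟪x, b i⟫ ^ 2 = ‖x‖ ^ 2 := by
  have := b.tsum_inner_mul_inner x x
  rw [real_inner_self_eq_norm_sq] at this
  rw [← this]
  exact tsum_congr fun i => by rw [real_inner_comm (b i) x, sq]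

/-- Central formula: `⟨G, H⟩_HS = ∑ σ_k ⟪H φ_k, ψ_k⟫`. -/
lemma hs_formula (b : HilbertBasis ι ℝ H1)
    (G : H1 →L[ℝ] H2) (σ : ℕ → ℝ) (φ : ℕ → H1) (ψ : ℕ → H2)
    (hσ : ∀ k, 0 ≤ σ k) (hσsum : Summable σ)
    (hφ : Orthonormal ℝ φ) (hψ : Orthonormal ℝ ψ)
    (hG : ∀ a, G a = ∑' k, (σ k * ⟪φ k, a⟫) • ψ k) (H : H1 →L[ℝ] H2) :
    hsInner b G H = ∑' k, σ k * ⟪H (φ k), ψ k⟫ := by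
  classical
  set u : ℕ → H1 := fun k => ContinuousLinearMap.adjoint H (ψ k) with hu_def
  have hun : ∀ k, ‖u k‖ ≤ ‖H‖ := by
    intro k
    calc ‖u k‖ ≤ ‖ContinuousLinearMap.adjoint H‖ * ‖ψ k‖ :=
          (ContinuousLinearMap.adjoint H).le_opNorm _
      _ = ‖H‖ := by rw [LinearIsometryEquiv.norm_map, hψ.1 k, mul_one]
  set F : ℕ → ι → ℝ := fun k i => σ k * (⟪φ k, b i⟫ * ⟪u k, b i⟫) with hF_def
  -- summability of F on the product
  have hg : Summable fun p : ℕ × ι => σ p.1 * (⟪φ p.1, b p.2⟫ ^ 2 + ⟪u p.1, b p.2⟫ ^ 2) := by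
    rw [summable_prod_of_nonneg]
    · constructor
      · intro k
        exact ((parseval_summable b (φ k)).add (parseval_summable b (u k))).mul_left (σ k)
      · have heq : ∀ k : ℕ, ∑' i, σ k * (⟪φ k, b i⟫ ^ 2 + ⟪u k, b i⟫ ^ 2)
            = σ k * (‖φ k‖ ^ 2 + ‖u k‖ ^ 2) := by
          intro k
          rw [tsum_mul_left, Summable.tsum_add (parseval_summable b (φ k)) (parseval_summable b (u k)),
            parseval_tsum, parseval_tsum]
        simp only [heq]
        apply Summable.of_nonneg_of_le
          (fun k => mul_nonneg (hσ k) (by positivity))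
          (fun k => ?_) (hσsum.mul_right (1 + ‖H‖ ^ 2))
        have h1 : ‖φ k‖ = 1 := hφ.1 k
        have h2 := hun k
        have h3 := hσ k
        have h4 : ‖u k‖ ^ 2 ≤ ‖H‖ ^ 2 := by nlinarith [norm_nonneg (u k)]
        rw [h1]
        nlinarith [mul_nonneg h3 (sub_nonneg.mpr h4)]
    · intro p
      exact mul_nonneg (hσ p.1) (by positivity)
  have hFsum : Summable fun p : ℕ × ι => F p.1 p.2 := by
    apply Summable.of_norm
    apply Summable.of_nonneg_of_le (fun p => norm_nonneg _) _ hg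
    intro p
    rw [hF_def]
    simp only [Real.norm_eq_abs]
    rw [abs_mul, abs_of_nonneg (hσ p.1)]
    exact mul_le_mul_of_nonneg_left (abs_mul_le_sq_add_sq _ _) (hσ p.1)
  -- pointwise identity
  have hinner : ∀ i, ⟪G (b i), H (b i)⟫ = ∑' k, F k i := by
    intro i
    have hz : Summable fun k => (σ k * ⟪φ k, b i⟫) • ψ k := by
      apply Summable.of_norm
      apply Summable.of_nonneg_of_le (fun k => norm_nonneg _) _ hσsum
      intro k
      rw [norm_smul, hψ.1 k, mul_one, Real.norm_eq_abs, abs_mul, abs_of_nonneg (hσ k)]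
      have := abs_real_inner_le_norm (φ k) (b i)
      rw [hφ.1 k, b.orthonormal.1 i, one_mul] at this
      calc σ k * |⟪φ k, b i⟫| ≤ σ k * 1 := mul_le_mul_of_nonneg_left this (hσ k)
        _ = σ k := mul_one _
    have hmap : (innerSL ℝ (H (b i))) (∑' k, (σ k * ⟪φ k, b i⟫) • ψ k)
        = ∑' k, (innerSL ℝ (H (b i))) ((σ k * ⟪φ k, b i⟫) • ψ k) :=
      ContinuousLinearMap.map_tsum _ hz
    rw [hG (b i), real_inner_comm]
    refine hmap.trans (tsum_congr fun k => ?_)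
    simp only [innerSL_apply_apply, inner_smul_right, hF_def, hu_def]
    rw [ContinuousLinearMap.adjoint_inner_left]
    rw [real_inner_comm (H (b i)) (ψ k)]
    ring
  have hswap : hsInner b G H = ∑' k, ∑' i, F k i := by
    rw [hsInner]
    simp only [hinner]
    exact Summable.tsum_comm hFsum
  rw [hswap]
  refine tsum_congr fun k => ?_
  rw [hF_def]
  simp only
  rw [tsum_mul_left]
  congr 1
  have : ∀ i : ι, ⟪φ k, b i⟫ * ⟪u k, b i⟫ = ⟪φ k, b i⟫ * ⟪b i, u k⟫ := fun i => by
    rw [real_inner_comm (u k) (b i)]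
  rw [tsum_congr this, b.tsum_inner_mul_inner, hu_def]
  exact ContinuousLinearMap.adjoint_inner_right H (φ k) (ψ k)

end aux

/-- Dual formula for the nuclear norm: given a compact operator `G` with finite nuclear norm
(presented by its singular value decomposition `G = Σ σ_k φ_k ⊗ ψ_k` with `Σ σ_k < ∞`),
`‖G‖_* = Σ σ_k` is the supremum of `⟨G, H⟩_{HS}` over Hilbert–Schmidt operators `H`
with operator norm at most `1`. -/
theorem stmt7 {H1 H2 ι : Type*}
    [NormedAddCommGroup H1] [InnerProductSpace ℝ H1] [CompleteSpace H1]
    [TopologicalSpace.SeparableSpace H1]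
    [NormedAddCommGroup H2] [InnerProductSpace ℝ H2] [CompleteSpace H2]
    [TopologicalSpace.SeparableSpace H2]
    (b : HilbertBasis ι ℝ H1)
    (G : H1 →L[ℝ] H2) (σ : ℕ → ℝ) (φ : ℕ → H1) (ψ : ℕ → H2)
    (hσ : ∀ k, 0 ≤ σ k) (hσsum : Summable σ)
    (hφ : Orthonormal ℝ φ) (hψ : Orthonormal ℝ ψ)
    (hG : ∀ a, G a = ∑' k, (σ k * ⟪φ k, a⟫) • ψ k) :
    IsLUB {x : ℝ | ∃ H : H1 →L[ℝ] H2, (Summable fun i => ‖H (b i)‖ ^ 2) ∧ ‖H‖ ≤ 1 ∧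
      x = hsInner b G H} (∑' k, σ k) := by
  classical
  set T : ℕ → (H1 →L[ℝ] H2) :=
    fun N => ∑ k ∈ Finset.range N, ((innerSL ℝ (φ k)).smulRight (ψ k)) with hT_def
  have hTapp : ∀ N x, T N x = ∑ k ∈ Finset.range N, ⟪φ k, x⟫ • ψ k := by
    intro N x
    simp [hT_def, ContinuousLinearMap.sum_apply]
  have hTnormsq : ∀ N x, ‖T N x‖ ^ 2 = ∑ k ∈ Finset.range N, ⟪φ k, x⟫ ^ 2 := by
    intro N x
    rw [← real_inner_self_eq_norm_sq, hTapp,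
      hψ.inner_sum (fun k => ⟪φ k, x⟫) (fun k => ⟪φ k, x⟫)]
    exact Finset.sum_congr rfl fun k _ => by simp [sq]
  have hTnorm : ∀ N, ‖T N‖ ≤ 1 := by
    intro N
    refine ContinuousLinearMap.opNorm_le_bound _ zero_le_one fun x => ?_
    rw [one_mul]
    have h1 : ‖T N x‖ ^ 2 ≤ ‖x‖ ^ 2 := by
      rw [hTnormsq]
      have := hφ.sum_inner_products_le x (s := Finset.range N)
      simpa [sq_abs] using this
    calc ‖T N x‖ = Real.sqrt (‖T N x‖ ^ 2) := (Real.sqrt_sq (norm_nonneg _)).symm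
      _ ≤ Real.sqrt (‖x‖ ^ 2) := Real.sqrt_le_sqrt h1
      _ = ‖x‖ := Real.sqrt_sq (norm_nonneg _)
  have hTHS : ∀ N, Summable fun i => ‖T N (b i)‖ ^ 2 := by
    intro N
    have : ∀ i, ‖T N (b i)‖ ^ 2 = ∑ k ∈ Finset.range N, ⟪φ k, b i⟫ ^ 2 := fun i => hTnormsq N (b i)
    simp only [this]
    exact summable_sum fun k _ => parseval_summable b (φ k)
  have hTphi : ∀ N k, T N (φ k) = if k ∈ Finset.range N then ψ k else 0 := by
    intro N k
    rw [hTapp]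
    rw [show (∑ j ∈ Finset.range N, ⟪φ j, φ k⟫ • ψ j)
        = ∑ j ∈ Finset.range N, (if j = k then (1:ℝ) else 0) • ψ j from
      Finset.sum_congr rfl fun j _ => by rw [orthonormal_iff_ite.mp hφ]]
    simp [Finset.sum_ite_eq']
  have hsummand : ∀ H : H1 →L[ℝ] H2, Summable fun k => σ k * ⟪H (φ k), ψ k⟫ := by
    intro H
    apply Summable.of_norm
    apply Summable.of_nonneg_of_le (fun k => norm_nonneg _) _ (hσsum.mul_right ‖H‖)
    intro k
    rw [Real.norm_eq_abs, abs_mul, abs_of_nonneg (hσ k)]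
    refine mul_le_mul_of_nonneg_left ?_ (hσ k)
    have := abs_real_inner_le_norm (H (φ k)) (ψ k)
    rw [hψ.1 k, mul_one] at this
    calc |⟪H (φ k), ψ k⟫| ≤ ‖H (φ k)‖ := this
      _ ≤ ‖H‖ * ‖φ k‖ := H.le_opNorm _
      _ = ‖H‖ := by rw [hφ.1 k, mul_one]
  constructor
  · rintro x ⟨H, hHS, hHnorm, rfl⟩
    rw [hs_formula b G σ φ ψ hσ hσsum hφ hψ hG H]
    refine Summable.tsum_le_tsum (fun k => ?_) (hsummand H) hσsum
    have hb : ⟪H (φ k), ψ k⟫ ≤ 1 := by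
      have := real_inner_le_norm (H (φ k)) (ψ k)
      rw [hψ.1 k, mul_one] at this
      calc ⟪H (φ k), ψ k⟫ ≤ ‖H (φ k)‖ := this
        _ ≤ ‖H‖ * ‖φ k‖ := H.le_opNorm _
        _ ≤ 1 := by rw [hφ.1 k, mul_one]; exact hHnorm
    calc σ k * ⟪H (φ k), ψ k⟫ ≤ σ k * 1 := mul_le_mul_of_nonneg_left hb (hσ k)
      _ = σ k := mul_one _
  · intro y hy
    have hmem : ∀ N, ∑ k ∈ Finset.range N, σ k ≤ y := by
      intro N
      apply hy
      refine ⟨T N, hTHS N, hTnorm N, ?_⟩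
      rw [hs_formula b G σ φ ψ hσ hσsum hφ hψ hG (T N)]
      rw [tsum_eq_sum (s := Finset.range N) (f := fun k => σ k * ⟪T N (φ k), ψ k⟫)
        (fun k hk => by show σ k * ⟪T N (φ k), ψ k⟫ = 0; rw [hTphi N k, if_neg hk]; simp)]
      refine (Finset.sum_congr rfl fun k hk => ?_).symm
      rw [hTphi N k, if_pos hk, real_inner_self_eq_norm_sq, hψ.1 k]
      norm_num
    exact le_of_tendsto' hσsum.hasSum.tendsto_sum_nat hmem
end

section
/- Let Ω ⊂ ℝ^d be a bounded connected open set, u† ∈ H²(Ω) with inf_Ω u† > 0, and q ∈ L²(Ω) with q ≥ 0 and ∫_Ω q > 0. Let u = u†/‖u†‖_{H²} and suppose ‖q‖_{L²} = 1 (q normalized). Define T = { u ⊗ a + b ⊗ q : a ∈ L²(Ω), b ∈ H²(Ω) } inside B2(H²(Ω); L²(Ω)). Suppose F = u ⊗ a + b ⊗ q satisfies u(x)a(x) + b(x)q(x) = 0 for a.e. x ∈ Ω and (∫_Ω q) b = −(∫_Ω a) u. Then F = 0. -/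
/-!
The moment condition makes `b` the multiple `-k u` of `u`, with `k = (∫ a) / (∫ q)`. As `u`
vanishes nowhere on `Ω`, the diagonal condition `u a + b q = 0` then forces `a = k q`, and the
two terms of `F = u ⊗ a + b ⊗ q` cancel.
-/

open MeasureTheory

section TensorCancellation

variable {α β : Type*} [MeasurableSpace α] [MeasurableSpace β]

theorem ae_eq_const_mul_of_mul_add_mul_eq_zero {μ : Measure α} {u a b q : α → ℝ} {k : ℝ}
    (hu : ∀ᵐ x ∂μ, u x ≠ 0) (hdiag : ∀ᵐ x ∂μ, u x * a x + b x * q x = 0)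
    (hb : b =ᵐ[μ] fun x => -k * u x) : a =ᵐ[μ] fun x => k * q x := by
  filter_upwards [hu, hdiag, hb] with x hux hx hbx
  rw [hbx] at hx
  have : u x * (a x - k * q x) = 0 := by linear_combination hx
  exact sub_eq_zero.mp ((mul_eq_zero.mp this).resolve_left hux)

theorem ae_prod_mul_add_mul_eq_zero {μ : Measure α} {ν : Measure β} [SFinite ν]
    {u b : α → ℝ} {a q : β → ℝ} {k : ℝ}
    (hb : b =ᵐ[μ] fun x => -k * u x) (ha : a =ᵐ[ν] fun y => k * q y) :
    ∀ᵐ p ∂μ.prod ν, u p.1 * a p.2 + b p.1 * q p.2 = 0 := by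
  filter_upwards [Measure.quasiMeasurePreserving_fst.ae hb,
    Measure.quasiMeasurePreserving_snd.ae ha] with p hbp hap
  rw [hbp, hap]
  ring

end TensorCancellation

theorem stmt10_general {d : ℕ} (Ω : Set (EuclideanSpace ℝ (Fin d)))
    (hΩm : MeasurableSet Ω)
    (u a b q : EuclideanSpace ℝ (Fin d) → ℝ)
    -- `u` is the normalization of `u† ∈ H²(Ω)` with `inf_Ω u† > 0`:
    (c : ℝ) (hc : 0 < c) (hcu : ∀ x ∈ Ω, c ≤ u x)
    (hqint : 0 < ∫ x, q x ∂(volume.restrict Ω))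
    -- `u(x) a(x) + b(x) q(x) = 0` for a.e. `x ∈ Ω`:
    (hdiag : ∀ᵐ x ∂(volume.restrict Ω), u x * a x + b x * q x = 0)
    -- `(∫ q) b = -(∫ a) u`:
    (hprop : ∀ᵐ x ∂(volume.restrict Ω),
      (∫ y, q y ∂(volume.restrict Ω)) * b x = -(∫ y, a y ∂(volume.restrict Ω)) * u x) :
    -- `F = 0`, i.e. `u(x) a(y) + b(x) q(y) = 0` a.e. on `Ω × Ω`:
    ∀ᵐ p ∂((volume.restrict Ω).prod (volume.restrict Ω)),
      u p.1 * a p.2 + b p.1 * q p.2 = 0 := by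
  set Q := ∫ y, q y ∂(volume.restrict Ω)
  set k := (∫ y, a y ∂(volume.restrict Ω)) / Q
  have hb : b =ᵐ[volume.restrict Ω] fun x => -k * u x := by
    filter_upwards [hprop] with x hx
    simp only [k]
    field_simp
    linarith
  have hu : ∀ᵐ x ∂(volume.restrict Ω), u x ≠ 0 := by
    filter_upwards [ae_restrict_mem hΩm] with x hx
    exact (hc.trans_le (hcu x hx)).ne'
  exact ae_prod_mul_add_mul_eq_zero hb (ae_eq_const_mul_of_mul_add_mul_eq_zero hu hdiag hb)

/-- Injectivity of the measurement operator on the model tangent space `T`, for the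
internal-measurements toy problem: if `F = u ⊗ a + b ⊗ q` satisfies
`u(x)a(x) + b(x)q(x) = 0` a.e. and `(∫ q) b = -(∫ a) u`, then `F = 0`. -/
theorem stmt10 {d : ℕ} (Ω : Set (EuclideanSpace ℝ (Fin d)))
    (hΩo : IsOpen Ω) (hΩconn : IsConnected Ω) (hΩb : Bornology.IsBounded Ω)
    (hΩm : MeasurableSet Ω)
    (u a b q : EuclideanSpace ℝ (Fin d) → ℝ)
    -- `u` is the normalization of `u† ∈ H²(Ω)` with `inf_Ω u† > 0`:
    (c : ℝ) (hc : 0 < c) (hcu : ∀ x ∈ Ω, c ≤ u x)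
    (hum : AEStronglyMeasurable u (volume.restrict Ω))
    (ha : MemLp a 2 (volume.restrict Ω))
    (hb : MemLp b 2 (volume.restrict Ω))
    (hq : MemLp q 2 (volume.restrict Ω))
    (hqpos : 0 ≤ᵐ[volume.restrict Ω] q)
    (hqnorm : eLpNorm q 2 (volume.restrict Ω) = 1)
    (hqint : 0 < ∫ x, q x ∂(volume.restrict Ω))
    -- `u(x) a(x) + b(x) q(x) = 0` for a.e. `x ∈ Ω`:
    (hdiag : ∀ᵐ x ∂(volume.restrict Ω), u x * a x + b x * q x = 0)
    -- `(∫ q) b = -(∫ a) u`: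
    (hprop : ∀ᵐ x ∂(volume.restrict Ω),
      (∫ y, q y ∂(volume.restrict Ω)) * b x = -(∫ y, a y ∂(volume.restrict Ω)) * u x) :
    -- `F = 0`, i.e. `u(x) a(y) + b(x) q(y) = 0` a.e. on `Ω × Ω`:
    ∀ᵐ p ∂((volume.restrict Ω).prod (volume.restrict Ω)),
      u p.1 * a p.2 + b p.1 * q p.2 = 0 :=
  stmt10_general Ω hΩm u a b q c hc hcu hqint hdiag hprop
end

section
/- Let Ω ⊂ ℝ^d be bounded, u ∈ L^∞(Ω) with inf_Ω u > 0, q ∈ L²(Ω) ∩ L^∞(Ω) with ‖q‖_{L²} = 1 and ∫_Ω q > 0, and α = (ess inf q + ess sup q)/2. Then for all a ∈ L²(Ω) with ‖a‖_{L²} ≤ 1 and all b ∈ L²(Ω) with ‖b‖_{L²} = 1 and ⟨b,q⟩_{L²} = 0, the quantity L_α(a,b) := ∫_Ω (b(y) − (∫_Ω b / ∫_Ω q) q(y)) ((q(y) − α)/u(y)) a(y) dy satisfies |L_α(a,b)| ≤ (|Ω| / (∫_Ω q)²) · (ess sup q − ess inf q) / (2 inf_Ω u). -/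
/-! With `β = ∫ b / ∫ q`, Hölder's inequality gives
`|L_α(a,b)| ≤ ‖(q - α)/u‖_∞ ‖b - β q‖₂ ‖a‖₂`, and the midpoint choice of `α` makes
`‖(q - α)/u‖_∞ ≤ (ess sup q - ess inf q) / (2 inf u)`. Since `b ⊥ q` are unit vectors of `L²(Ω)`,
`‖b - β q‖₂² = 1 + β²`, and Bessel's inequality for the constant `1` against `{b, q}` gives
`(∫ b)² + (∫ q)² ≤ |Ω|`, i.e. `1 + β² ≤ |Ω| / (∫ q)²`. As `1 + β² ≥ 1`, the norm itself is also
at most `|Ω| / (∫ q)²`. -/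

open MeasureTheory Filter
open scoped ENNReal RealInnerProductSpace

theorem norm_sub_div_inner_smul_le {E : Type*} [NormedAddCommGroup E] [InnerProductSpace ℝ E]
    {x y z : E} (hx : ‖x‖ = 1) (hy : ‖y‖ = 1) (hxy : ⟪x, y⟫ = 0) (hzy : ⟪z, y⟫ ≠ 0) :
    ‖x - (⟪z, x⟫ / ⟪z, y⟫) • y‖ ≤ ‖z‖ ^ 2 / ⟪z, y⟫ ^ 2 := by
  set β := ⟪z, x⟫ / ⟪z, y⟫
  have hnorm_sq : ‖x - β • y‖ ^ 2 = 1 + β ^ 2 := by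
    rw [norm_sub_sq_real, inner_smul_right, norm_smul, hxy, hx, hy, mul_pow, Real.norm_eq_abs,
      sq_abs]
    ring
  have hbessel : ⟪z, x⟫ ^ 2 + ⟪z, y⟫ ^ 2 ≤ ‖z‖ ^ 2 := by
    have hon : Orthonormal ℝ ![x, y] := by
      rw [orthonormal_iff_ite]
      intro i j
      fin_cases i <;> fin_cases j <;>
        simp [hxy, real_inner_comm x y, hx, hy]
    simpa [Fin.sum_univ_two, real_inner_comm z] using
      hon.sum_inner_products_le z (s := Finset.univ)
  have hone : 1 ≤ ‖x - β • y‖ := by nlinarith [norm_nonneg (x - β • y), sq_nonneg β]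
  calc ‖x - β • y‖ ≤ ‖x - β • y‖ ^ 2 := le_self_pow₀ hone two_ne_zero
    _ = (⟪z, x⟫ ^ 2 + ⟪z, y⟫ ^ 2) / ⟪z, y⟫ ^ 2 := by rw [hnorm_sq, div_pow]; field_simp; ring
    _ ≤ ‖z‖ ^ 2 / ⟪z, y⟫ ^ 2 := by gcongr

namespace MeasureTheory.MemLp

variable {α : Type*} [MeasurableSpace α] {μ : Measure α} {f g : α → ℝ}

theorem inner_toLp_eq_integral_mul (hf : MemLp f 2 μ) (hg : MemLp g 2 μ) :
    ⟪hf.toLp f, hg.toLp g⟫ = ∫ x, f x * g x ∂μ := by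
  rw [L2.inner_def]
  refine integral_congr_ae ?_
  filter_upwards [hf.coeFn_toLp, hg.coeFn_toLp] with x hfx hgx
  simp [hfx, hgx, mul_comm]

theorem norm_toLp_eq_sqrt_integral_sq (hf : MemLp f 2 μ) :
    ‖hf.toLp f‖ = √(∫ x, f x ^ 2 ∂μ) := by
  rw [norm_eq_sqrt_real_inner, inner_toLp_eq_integral_mul]
  simp only [sq]

theorem ae_essInf_le_and_le_essSup (hf : MemLp f ∞ μ) :
    ∀ᵐ x ∂μ, essInf f μ ≤ f x ∧ f x ≤ essSup f μ := by
  have hbdd : IsBoundedUnder (· ≤ ·) (ae μ) fun x => |f x| := by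
    obtain ⟨C, hC⟩ := eLpNormEssSup_lt_top_iff_isBoundedUnder.1
      (eLpNorm_exponent_top (f := f) ▸ hf.eLpNorm_lt_top)
    refine ⟨C, ?_⟩
    simpa [← NNReal.coe_le_coe] using hC
  rw [isBoundedUnder_le_abs] at hbdd
  exact (ae_essInf_le hbdd.2).and (ae_le_essSup hbdd.1)

end MeasureTheory.MemLp

namespace MeasureTheory

variable {α : Type*} [MeasurableSpace α] {μ : Measure α}

theorem integral_abs_mul_le_sqrt_mul_sqrt {f g : α → ℝ} (hf : MemLp f 2 μ) (hg : MemLp g 2 μ) :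
    ∫ x, |f x * g x| ∂μ ≤ √(∫ x, f x ^ 2 ∂μ) * √(∫ x, g x ^ 2 ∂μ) := by
  have := real_inner_le_norm (hf.abs.toLp |f|) (hg.abs.toLp |g|)
  rw [MemLp.inner_toLp_eq_integral_mul, MemLp.norm_toLp_eq_sqrt_integral_sq,
    MemLp.norm_toLp_eq_sqrt_integral_sq] at this
  simpa [abs_mul] using this

theorem abs_integral_mul_mul_le_of_sqrt_integral_sq_le [NeZero μ] {f w g : α → ℝ} {M A B : ℝ}
    (hf : MemLp f 2 μ) (hg : MemLp g 2 μ) (hw : ∀ᵐ x ∂μ, |w x| ≤ M)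
    (hA : √(∫ x, f x ^ 2 ∂μ) ≤ A) (hB : √(∫ x, g x ^ 2 ∂μ) ≤ B) :
    |∫ x, f x * w x * g x ∂μ| ≤ M * (A * B) := by
  have hM : 0 ≤ M :=
    have := ae_neBot.2 (NeZero.ne μ)
    hw.exists.elim fun x hx => (abs_nonneg _).trans hx
  have hfg : Integrable (fun x => |f x * g x|) μ := (hf.integrable_mul hg).abs
  calc |∫ x, f x * w x * g x ∂μ| ≤ ∫ x, |f x * w x * g x| ∂μ := abs_integral_le_integral_abs
    _ ≤ ∫ x, M * |f x * g x| ∂μ := by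
        refine integral_mono_of_nonneg (ae_of_all _ fun x => abs_nonneg _) (hfg.const_mul M) ?_
        filter_upwards [hw] with x hx
        simp only [abs_mul]
        nlinarith [mul_nonneg (abs_nonneg (f x)) (abs_nonneg (g x))]
    _ = M * ∫ x, |f x * g x| ∂μ := integral_const_mul M _
    _ ≤ M * (√(∫ x, f x ^ 2 ∂μ) * √(∫ x, g x ^ 2 ∂μ)) :=
        mul_le_mul_of_nonneg_left (integral_abs_mul_le_sqrt_mul_sqrt hf hg) hM
    _ ≤ M * (A * B) := by gcongr; exact (Real.sqrt_nonneg _).trans hA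

theorem sqrt_integral_sub_div_mul_sq_le [IsFiniteMeasure μ] {b q : α → ℝ} (hb : MemLp b 2 μ)
    (hq : MemLp q 2 μ) (hb2 : ∫ x, b x ^ 2 ∂μ = 1) (hq2 : ∫ x, q x ^ 2 ∂μ = 1)
    (horth : ∫ x, b x * q x ∂μ = 0) (hq0 : ∫ x, q x ∂μ ≠ 0) :
    √(∫ x, (b x - (∫ x, b x ∂μ) / (∫ x, q x ∂μ) * q x) ^ 2 ∂μ)
      ≤ μ.real Set.univ / (∫ x, q x ∂μ) ^ 2 := by
  have h1 : MemLp (fun _ => (1 : ℝ)) 2 μ := memLp_const 1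
  have key := norm_sub_div_inner_smul_le (x := hb.toLp b) (y := hq.toLp q) (z := h1.toLp _)
    (by rw [MemLp.norm_toLp_eq_sqrt_integral_sq, hb2, Real.sqrt_one])
    (by rw [MemLp.norm_toLp_eq_sqrt_integral_sq, hq2, Real.sqrt_one])
    (by rwa [MemLp.inner_toLp_eq_integral_mul])
    (by rw [MemLp.inner_toLp_eq_integral_mul]; simpa using hq0)
  simp only [MemLp.inner_toLp_eq_integral_mul, one_mul] at key
  rw [← MemLp.toLp_const_smul, ← MemLp.toLp_sub, MemLp.norm_toLp_eq_sqrt_integral_sq,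
    MemLp.norm_toLp_eq_sqrt_integral_sq] at key
  simpa using key

end MeasureTheory

theorem abs_sub_midpoint_div_le {t I S c v : ℝ} (hI : I ≤ t) (hS : t ≤ S) (hc : 0 < c)
    (hv : c ≤ v) : |(t - (I + S) / 2) / v| ≤ (S - I) / (2 * c) := by
  have hmid : |t - (I + S) / 2| ≤ (S - I) / 2 := abs_le.2 ⟨by linarith, by linarith⟩
  rw [abs_div, abs_of_pos (hc.trans_le hv)]
  calc |t - (I + S) / 2| / v ≤ (S - I) / 2 / c := div_le_div₀ (by linarith) hmid hc hv
    _ = (S - I) / (2 * c) := by ring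

theorem stmt14_general {d : ℕ} (Ω : Set (EuclideanSpace ℝ (Fin d)))
    (hΩb : Bornology.IsBounded Ω) (hΩm : MeasurableSet Ω)
    (u q a b : EuclideanSpace ℝ (Fin d) → ℝ)
    -- `inf_Ω u > 0`:
    (cu : ℝ) (hcu : 0 < cu) (hcuu : ∀ x ∈ Ω, cu ≤ u x)
    -- `q ∈ L²(Ω) ∩ L^∞(Ω)` with `‖q‖_{L²} = 1` and `∫_Ω q > 0`:
    (hq : MemLp q 2 (volume.restrict Ω)) (hqi : MemLp q ⊤ (volume.restrict Ω))
    (hq2 : ∫ x, q x ^ 2 ∂(volume.restrict Ω) = 1)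
    (hqpos : 0 < ∫ x, q x ∂(volume.restrict Ω))
    -- `‖a‖_{L²} ≤ 1`:
    (ha : MemLp a 2 (volume.restrict Ω)) (ha1 : ∫ x, a x ^ 2 ∂(volume.restrict Ω) ≤ 1)
    -- `‖b‖_{L²} = 1` and `⟨b, q⟩_{L²} = 0`:
    (hb : MemLp b 2 (volume.restrict Ω))
    (hb2 : ∫ x, b x ^ 2 ∂(volume.restrict Ω) = 1)
    (horth : ∫ x, b x * q x ∂(volume.restrict Ω) = 0)
    (α : ℝ)
    (hα : α = (essInf q (volume.restrict Ω) + essSup q (volume.restrict Ω)) / 2) :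
    |∫ y, (b y - ((∫ x, b x ∂(volume.restrict Ω)) / (∫ x, q x ∂(volume.restrict Ω))) * q y)
        * ((q y - α) / u y) * a y ∂(volume.restrict Ω)|
      ≤ ((volume Ω).toReal / (∫ x, q x ∂(volume.restrict Ω)) ^ 2)
        * ((essSup q (volume.restrict Ω) - essInf q (volume.restrict Ω)) / (2 * cu)) := by
  set μ := volume.restrict Ω
  have : IsFiniteMeasure μ := isFiniteMeasure_restrict.2 hΩb.measure_lt_top.ne
  have : NeZero μ := ⟨fun h => by simp [h] at hqpos⟩
  have hw : ∀ᵐ y ∂μ, |(q y - α) / u y| ≤ (essSup q μ - essInf q μ) / (2 * cu) := by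
    filter_upwards [hqi.ae_essInf_le_and_le_essSup, ae_restrict_of_forall_mem hΩm hcuu]
      with y ⟨hIq, hqS⟩ hu
    exact hα ▸ abs_sub_midpoint_div_le hIq hqS hcu hu
  calc _ ≤ _ := abs_integral_mul_mul_le_of_sqrt_integral_sq_le (hb.sub (hq.const_mul _)) ha hw
        (sqrt_integral_sub_div_mul_sq_le hb hq hb2 hq2 horth hqpos.ne') (Real.sqrt_le_one.2 ha1)
    _ = _ := by rw [measureReal_restrict_apply_univ, measureReal_def]; ring

/-- The key estimate on the quantity `L_α(a,b)` in the construction of the dual certificate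
for the internal-measurements problem, with the optimal choice
`α = (ess inf q + ess sup q)/2`. Here `cu` is any positive lower bound of `u` on `Ω`
(so the statement with `cu = inf_Ω u` is the estimate of the paper). -/
theorem stmt14 {d : ℕ} (Ω : Set (EuclideanSpace ℝ (Fin d)))
    (hΩb : Bornology.IsBounded Ω) (hΩm : MeasurableSet Ω)
    (u q a b : EuclideanSpace ℝ (Fin d) → ℝ)
    (hum : AEStronglyMeasurable u (volume.restrict Ω))
    -- `inf_Ω u > 0`:
    (cu : ℝ) (hcu : 0 < cu) (hcuu : ∀ x ∈ Ω, cu ≤ u x)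
    -- `q ∈ L²(Ω) ∩ L^∞(Ω)` with `‖q‖_{L²} = 1` and `∫_Ω q > 0`:
    (hq : MemLp q 2 (volume.restrict Ω)) (hqi : MemLp q ⊤ (volume.restrict Ω))
    (hq2 : ∫ x, q x ^ 2 ∂(volume.restrict Ω) = 1)
    (hqpos : 0 < ∫ x, q x ∂(volume.restrict Ω))
    -- `‖a‖_{L²} ≤ 1`:
    (ha : MemLp a 2 (volume.restrict Ω)) (ha1 : ∫ x, a x ^ 2 ∂(volume.restrict Ω) ≤ 1)
    -- `‖b‖_{L²} = 1` and `⟨b, q⟩_{L²} = 0`: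
    (hb : MemLp b 2 (volume.restrict Ω))
    (hb2 : ∫ x, b x ^ 2 ∂(volume.restrict Ω) = 1)
    (horth : ∫ x, b x * q x ∂(volume.restrict Ω) = 0)
    (α : ℝ)
    (hα : α = (essInf q (volume.restrict Ω) + essSup q (volume.restrict Ω)) / 2) :
    |∫ y, (b y - ((∫ x, b x ∂(volume.restrict Ω)) / (∫ x, q x ∂(volume.restrict Ω))) * q y)
        * ((q y - α) / u y) * a y ∂(volume.restrict Ω)|
      ≤ ((volume Ω).toReal / (∫ x, q x ∂(volume.restrict Ω)) ^ 2)
        * ((essSup q (volume.restrict Ω) - essInf q (volume.restrict Ω)) / (2 * cu)) :=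
  stmt14_general Ω hΩb hΩm u q a b cu hcu hcuu hq hqi hq2 hqpos ha ha1 hb hb2 horth α hα
end

section
/- Let H be a real Hilbert space, Φ : K → H bounded linear on a Hilbert space K, J : K → [0, +∞] proper convex lsc, F† ∈ K with z = Φ F†, p ∈ H with Φ* p ∈ ∂J(F†), and δ, λ > 0. If F^δ minimizes F ↦ (1/2)‖Φ F − z^δ‖² + λ J(F) with ‖z^δ − z‖ ≤ δ, then the Bregman divergence D(F^δ, F†) := J(F^δ) − J(F†) − ⟨Φ* p, F^δ − F†⟩ satisfies D(F^δ, F†) ≤ (δ + λ‖p‖)² / (2λ), and moreover ‖Φ F^δ − Φ F†‖ ≤ 2λ‖p‖ + 2δ. -/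
open scoped RealInnerProductSpace

/-- Bregman rate and prediction error under the source condition: if `Φ* p ∈ ∂J(F†)` and
`F^δ` minimizes `F ↦ ½‖Φ F − z^δ‖² + λ J(F)` with `‖z^δ − z‖ ≤ δ`, then the Bregman
divergence `D(F^δ, F†) = J(F^δ) − J(F†) − ⟪Φ* p, F^δ − F†⟫` is at most `(δ + λ‖p‖)²/(2λ)`,
and `‖Φ F^δ − Φ F†‖ ≤ 2λ‖p‖ + 2δ`. -/
theorem stmt18 {K H : Type*}
    [NormedAddCommGroup K] [InnerProductSpace ℝ K] [CompleteSpace K]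
    [NormedAddCommGroup H] [InnerProductSpace ℝ H] [CompleteSpace H]
    (Φ : K →L[ℝ] H)
    (J : K → EReal)
    -- `J` takes values in `[0, +∞]`:
    (hJnn : ∀ F, 0 ≤ J F)
    -- proper:
    (hproper : ∃ F, J F ≠ ⊤)
    -- convex:
    (hconv : ∀ (x y : K) (t : ℝ), 0 ≤ t → t ≤ 1 →
      J (t • x + (1 - t) • y) ≤ (t : EReal) * J x + ((1 - t : ℝ) : EReal) * J y)
    -- lower semi-continuous:
    (hlsc : LowerSemicontinuous J)
    (Fd : K) (z : H) (hz : z = Φ Fd)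
    (p : H)
    -- `Φ* p ∈ ∂J(F†)`:
    (hsub : ∀ F : K,
      J Fd + ((⟪ContinuousLinearMap.adjoint Φ p, F - Fd⟫ : ℝ) : EReal) ≤ J F)
    (δ lam : ℝ) (hδ : 0 < δ) (hlam : 0 < lam)
    (zδ : H) (hzδ : ‖zδ - z‖ ≤ δ)
    (Fδ : K)
    -- `F^δ` minimizes `F ↦ ½‖Φ F − z^δ‖² + λ J(F)`:
    (hmin : ∀ F : K,
      (((1 : ℝ) / 2 * ‖Φ Fδ - zδ‖ ^ 2 : ℝ) : EReal) + (lam : EReal) * J Fδ ≤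
        (((1 : ℝ) / 2 * ‖Φ F - zδ‖ ^ 2 : ℝ) : EReal) + (lam : EReal) * J F) :
    J Fδ - J Fd - ((⟪ContinuousLinearMap.adjoint Φ p, Fδ - Fd⟫ : ℝ) : EReal)
        ≤ (((δ + lam * ‖p‖) ^ 2 / (2 * lam) : ℝ) : EReal) ∧
    ‖Φ Fδ - Φ Fd‖ ≤ 2 * lam * ‖p‖ + 2 * δ := by
  obtain ⟨F0, hF0⟩ := hproper
  -- J Fd is finite
  have hdnb : J Fd ≠ ⊥ :=
    ((EReal.bot_lt_coe 0).trans_le (by exact_mod_cast hJnn Fd)).ne'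
  have hdnt : J Fd ≠ ⊤ := by
    intro h
    have := hsub F0
    rw [h, EReal.top_add_coe] at this
    exact hF0 (top_le_iff.mp this)
  have hδnb : J Fδ ≠ ⊥ :=
    ((EReal.bot_lt_coe 0).trans_le (by exact_mod_cast hJnn Fδ)).ne'
  have hδnt : J Fδ ≠ ⊤ := by
    intro h
    have hm := hmin Fd
    rw [h, EReal.coe_mul_top_of_pos hlam] at hm
    have : ((1:ℝ)/2 * ‖Φ Fδ - zδ‖^2 : ℝ) + (⊤:EReal) = ⊤ := by
      exact EReal.coe_add_top _
    rw [this, top_le_iff] at hm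
    lift J Fd to ℝ using ⟨hdnt, hdnb⟩ with b
    rw [← EReal.coe_mul, ← EReal.coe_add] at hm
    exact (EReal.coe_ne_top _) hm
  lift J Fd to ℝ using ⟨hdnt, hdnb⟩ with b hb
  lift J Fδ to ℝ using ⟨hδnt, hδnb⟩ with a ha
  -- real versions
  have hm : (1:ℝ)/2 * ‖Φ Fδ - zδ‖^2 + lam * a ≤ 1/2 * ‖Φ Fd - zδ‖^2 + lam * b := by
    have := hmin Fd
    rw [← hb, ← EReal.coe_mul, ← EReal.coe_mul, ← EReal.coe_add, ← EReal.coe_add] at this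
    exact_mod_cast this
  have hs : b + ⟪ContinuousLinearMap.adjoint Φ p, Fδ - Fd⟫ ≤ a := by
    have := hsub Fδ
    rw [← ha, ← EReal.coe_add] at this
    exact_mod_cast this
  set s : ℝ := ⟪ContinuousLinearMap.adjoint Φ p, Fδ - Fd⟫ with hsdef
  have hsin : s = ⟪p, Φ Fδ - zδ⟫ + ⟪p, zδ - z⟫ := by
    rw [hsdef, ContinuousLinearMap.adjoint_inner_left, map_sub, hz,
      ← inner_add_right]
    congr 1
    abel
  have hp0 : (0:ℝ) ≤ ‖p‖ := norm_nonneg p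
  set r : ℝ := ‖Φ Fδ - zδ‖ with hrdef
  have hr0 : (0:ℝ) ≤ r := norm_nonneg _
  set e : ℝ := ‖zδ - z‖ with hedef
  have he0 : (0:ℝ) ≤ e := norm_nonneg _
  have h1 : abs ⟪p, Φ Fδ - zδ⟫ ≤ ‖p‖ * r := abs_real_inner_le_norm _ _
  have h2 : abs ⟪p, zδ - z⟫ ≤ ‖p‖ * e := abs_real_inner_le_norm _ _
  have hns : -s ≤ ‖p‖ * r + ‖p‖ * e := by
    rw [hsin]
    have := abs_le.mp h1
    have := abs_le.mp h2
    linarith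
  have hFdz : ‖Φ Fd - zδ‖ = e := by rw [hedef, hz, norm_sub_rev]
  rw [hFdz] at hm
  -- key real inequality
  have key : lam * (a - b) ≤ 1/2 * e^2 - 1/2 * r^2 := by nlinarith
  clear_value s r e
  clear hmin hsub hlsc hconv hsin h1 h2
  constructor
  · rw [show ((a:EReal) - b - (s:EReal)) = ((a - b - s : ℝ) : EReal) by norm_cast]
    rw [EReal.coe_le_coe_iff, le_div_iff₀ (by positivity)]
    nlinarith [sq_nonneg (r - lam * ‖p‖), mul_pos hlam hδ, mul_nonneg hlam.le hp0,
      mul_nonneg (mul_nonneg hlam.le hp0) (sub_nonneg.mpr hzδ)]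
  · have hA := mul_le_mul_of_nonneg_left hs hlam.le
    have hB := mul_le_mul_of_nonneg_left hns hlam.le
    have hkey2 : 1/2*r^2 ≤ 1/2*e^2 + lam*‖p‖*r + lam*‖p‖*e := by nlinarith [hA, hB, key]
    have hrb : r ≤ e + 2 * lam * ‖p‖ := by
      have h3 : (r - (e + 2*lam*‖p‖)) * (r + e) ≤ 0 := by nlinarith [hkey2]
      rcases (add_nonneg hr0 he0).lt_or_eq with h|h
      · by_contra hc
        push_neg at hc
        linarith [mul_pos (sub_pos.mpr hc) h]
      · have htnn : 0 ≤ lam * ‖p‖ := mul_nonneg hlam.le hp0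
        linarith
    have : ‖Φ Fδ - Φ Fd‖ ≤ r + e := by
      rw [← hz]
      calc ‖Φ Fδ - z‖ = ‖(Φ Fδ - zδ) + (zδ - z)‖ := by congr 1; abel
        _ ≤ r + e := by rw [hrdef, hedef]; exact norm_add_le _ _
    linarith
end
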